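/- arXiv:2301.02210 — 5 statements merged into one kernel-verified Lean document; each statement's English description precedes it below -/
import Mathlib

section
/- Two-node model with a single repulsive edge: if G has two nodes 0 and 1 with A_01 = A_10 = -1 and |x_0(0) - x_1(0)| < c with x_0(0) ≠ x_1(0), then after one update step |x_0(1) - x_1(1)| = c, and hence the two nodes no longer influence each other and the model has converged with final separation exactly c. -/
open Finset
open scoped Classical

/-- Signed displacement `M i j` of the repulsive bounded-confidence model. -/
noncomputable def M {n : ℕ} (A : Fin n → Fin n → ℤ) (c : ℝ) (x : Fin n → ℝ)
    (i j : Fin n) : ℝ :=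
  if 0 ≤ A i j then x j - x i
  else if x j = x i then (if (i : ℕ) < (j : ℕ) then c else -c)
  else Real.sign (x j - x i) * abs (c - |x j - x i|)

/-- One step of the repulsive bounded-confidence update rule. -/
noncomputable def upd {n : ℕ} (A : Fin n → Fin n → ℤ) (c : ℝ) (x : Fin n → ℝ)
    (i : Fin n) : ℝ :=
  x i + (∑ j, if |x j - x i| < c then (A i j : ℝ) * M A c x i j else 0) /
        (∑ j, if |x j - x i| < c then (|A i j| : ℝ) else 0)

/-- Adjacency matrix of the two-node network with a single repulsive edge. -/
def Arep2 : Fin 2 → Fin 2 → ℤ := fun i j => if i = j then 1 else -1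

lemma upd_fix {c : ℝ} (hc : 0 < c) (y : Fin 2 → ℝ) (h : |y 0 - y 1| = c) (i : Fin 2) :
    upd Arep2 c y i = y i := by
  have h01 : ¬ |y 1 - y 0| < c := by rw [abs_sub_comm]; simp [h]
  have h10 : ¬ |y 0 - y 1| < c := by simp [h]
  fin_cases i <;>
    simp [upd, Fin.sum_univ_two, Arep2, M, h01, h10, hc]

/-- Two nodes joined by a repulsive edge, starting within confidence with distinct
opinions, reach separation exactly `c` after one step and the model has converged. -/
theorem two_node_repulsive {c : ℝ} (hc : 0 < c) (x : ℕ → Fin 2 → ℝ)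
    (hupd : ∀ t i, x (t + 1) i = upd Arep2 c (x t) i)
    (hconf : |x 0 0 - x 0 1| < c) (hne : x 0 0 ≠ x 0 1) :
    |x 1 0 - x 1 1| = c ∧ ∀ t, 1 ≤ t → x t = x 1 := by
  set a := x 0 0 with ha
  set b := x 0 1 with hb
  have hd : b - a ≠ 0 := sub_ne_zero.mpr (Ne.symm hne)
  have habs : |b - a| < c := by rwa [abs_sub_comm] at hconf
  have hpos : 0 < c - |b - a| := by linarith
  have hMabs : abs (c - |b - a|) = c - |b - a| := abs_of_pos hpos
  have hMabs' : abs (c - |a - b|) = c - |b - a| := by rw [abs_sub_comm a b]; exact hMabs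
  have hsn : Real.sign (a - b) = -Real.sign (b - a) := by
    rw [show a - b = -(b - a) by ring, Real.sign_neg]
  have e0 : x 1 0 = a + (-(Real.sign (b - a) * (c - |b - a|))) / 2 := by
    rw [hupd 0 0]
    simp [upd, Fin.sum_univ_two, Arep2, M, hconf, habs, hne.symm, hc, hMabs, ← ha, ← hb]
    ring
  have e1 : x 1 1 = b + (Real.sign (b - a) * (c - |b - a|)) / 2 := by
    rw [hupd 0 1]
    simp [upd, Fin.sum_univ_two, Arep2, M, hconf, habs, hne, hc, hMabs', hsn, ← ha, ← hb]
    ring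
  have hsma : Real.sign (b - a) * |b - a| = b - a := by
    rcases lt_or_gt_of_ne hd with h | h
    · rw [Real.sign_of_neg h, abs_of_neg h]; ring
    · rw [Real.sign_of_pos h, abs_of_pos h]; ring
  have hsabs : |Real.sign (b - a)| = 1 := by
    rcases lt_or_gt_of_ne hd with h | h
    · simp [Real.sign_of_neg h]
    · simp [Real.sign_of_pos h]
  have key : x 1 0 - x 1 1 = -(Real.sign (b - a)) * c := by
    rw [e0, e1]; nlinarith [hsma]
  have habs1 : |x 1 0 - x 1 1| = c := by
    rw [key, abs_mul, abs_neg, hsabs, one_mul, abs_of_pos hc]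
  refine ⟨habs1, ?_⟩
  intro t ht
  induction t with
  | zero => omega
  | succ n ih =>
    rcases Nat.lt_or_ge n 1 with h | h
    · have hn0 : n = 0 := by omega
      subst hn0; rfl
    · have hx : x n = x 1 := ih h
      funext i
      rw [hupd n i, hx]
      exact upd_fix hc (x 1) habs1 i
end

section
/- Two-node model bound: for a network with exactly 2 nodes and any edge configuration (no edge, attractive edge, or repulsive edge), the dynamics converge at some time T and |x_0(T) - x_1(T)| ≤ max{c, |x_0(0) - x_1(0)|}. -/
open Finset
open scoped Classical

lemma upd_far {c : ℝ} (hc : 0 < c) (A : Fin 2 → Fin 2 → ℤ)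
    (hdiag : ∀ i, A i i = 1) (y : Fin 2 → ℝ) (h : ¬ |y 1 - y 0| < c) (i : Fin 2) :
    upd A c y i = y i := by
  have h' : ¬ |y 0 - y 1| < c := by rwa [abs_sub_comm]
  fin_cases i <;>
    simp [upd, Fin.sum_univ_two, M, hdiag, h, h', abs_of_nonneg hc.le, hc]

lemma upd_zero {c : ℝ} (hc : 0 < c) (A : Fin 2 → Fin 2 → ℤ)
    (hdiag : ∀ i, A i i = 1) (h01 : A 0 1 = 0) (h10 : A 1 0 = 0)
    (y : Fin 2 → ℝ) (i : Fin 2) : upd A c y i = y i := by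
  fin_cases i <;>
    simp [upd, Fin.sum_univ_two, M, hdiag, h01, h10, abs_of_nonneg hc.le, hc]

lemma upd_consensus {c : ℝ} (hc : 0 < c) (A : Fin 2 → Fin 2 → ℤ)
    (hdiag : ∀ i, A i i = 1) (hA : 0 ≤ A 0 1) (hA' : 0 ≤ A 1 0)
    (y : Fin 2 → ℝ) (h : y 1 = y 0) (i : Fin 2) : upd A c y i = y i := by
  fin_cases i <;>
    simp [upd, Fin.sum_univ_two, M, hdiag, hA, hA', h, abs_of_nonneg hc.le, hc]

lemma upd_attract {c : ℝ} (hc : 0 < c) (A : Fin 2 → Fin 2 → ℤ)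
    (hdiag : ∀ i, A i i = 1) (h01 : A 0 1 = 1) (h10 : A 1 0 = 1)
    (y : Fin 2 → ℝ) (h : |y 1 - y 0| < c) :
    upd A c y 1 = upd A c y 0 := by
  have h' : |y 0 - y 1| < c := by rwa [abs_sub_comm]
  simp only [upd, Fin.sum_univ_two, M, hdiag, h01, h10]
  norm_num [h, h', abs_of_nonneg hc.le, hc]
  ring

lemma upd_repulse {c : ℝ} (hc : 0 < c) (A : Fin 2 → Fin 2 → ℤ)
    (hdiag : ∀ i, A i i = 1) (h01 : A 0 1 = -1) (h10 : A 1 0 = -1)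
    (y : Fin 2 → ℝ) (h : |y 1 - y 0| < c) :
    |upd A c y 1 - upd A c y 0| = c := by
  have h' : |y 0 - y 1| < c := by rwa [abs_sub_comm]
  have hnd : ¬ (0 : ℤ) ≤ -1 := by norm_num
  by_cases heq : y 1 = y 0
  · simp only [upd, Fin.sum_univ_two, M, hdiag, h01, h10]
    rw [heq] at *
    norm_num [h, abs_of_nonneg hc.le, hc]
    rw [show c / 2 - -c / 2 = c by ring, abs_of_nonneg hc.le]
  · have heq' : ¬ y 0 = y 1 := fun hh => heq hh.symm
    have habs : abs (c - |y 1 - y 0|) = c - |y 1 - y 0| := abs_of_nonneg (by linarith)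
    have habs' : abs (c - |y 0 - y 1|) = c - |y 1 - y 0| := by rw [abs_sub_comm (y 0)]; exact habs
    simp only [upd, Fin.sum_univ_two, M, hdiag, h01, h10, heq, heq', if_false]
    norm_num [h, h', abs_of_nonneg hc.le, hc, habs, habs']
    rcases lt_trichotomy (y 1 - y 0) 0 with hd | hd | hd
    · have hd' : 0 < y 0 - y 1 := by linarith
      rw [Real.sign_of_neg hd, Real.sign_of_pos hd', abs_of_neg hd] at *
      rw [show y 1 + -(1 * (c - -(y 1 - y 0))) / 2 - (y 0 + -(-1 * (c - -(y 1 - y 0))) / 2)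
          = -c by ring, abs_neg, abs_of_nonneg hc.le]
    · exact absurd (by linarith : y 1 = y 0) heq
    · have hd' : y 0 - y 1 < 0 := by linarith
      rw [Real.sign_of_pos hd, Real.sign_of_neg hd', abs_of_pos hd] at *
      rw [show y 1 + -(-1 * (c - (y 1 - y 0))) / 2 - (y 0 + -(1 * (c - (y 1 - y 0))) / 2)
          = c by ring, abs_of_nonneg hc.le]

lemma eventually_const {n : ℕ} (A : Fin n → Fin n → ℤ) (c : ℝ) (x : ℕ → Fin n → ℝ)
    (hupd : ∀ t i, x (t + 1) i = upd A c (x t) i) (T : ℕ)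
    (hfix : ∀ i, upd A c (x T) i = x T i) :
    ∀ t, T ≤ t → x t = x T := by
  intro t ht
  induction t with
  | zero => have : T = 0 := Nat.le_zero.mp ht; rw [this]
  | succ n ih =>
    rcases Nat.lt_or_ge n T with h | h
    · have : T = n + 1 := by omega
      rw [this]
    · funext i
      rw [hupd, ih h, hfix]

/-- Two-node bound: for any edge configuration the dynamics converge at some time
`T` with `|x₀(T) - x₁(T)| ≤ max {c, |x₀(0) - x₁(0)|}`. -/
theorem two_node_bound {c : ℝ} (hc : 0 < c) (A : Fin 2 → Fin 2 → ℤ)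
    (hdiag : ∀ i, A i i = 1) (hsym : A 0 1 = A 1 0)
    (hval : A 0 1 = -1 ∨ A 0 1 = 0 ∨ A 0 1 = 1)
    (x : ℕ → Fin 2 → ℝ) (hupd : ∀ t i, x (t + 1) i = upd A c (x t) i) :
    ∃ T, (∀ t, T ≤ t → x t = x T) ∧
      |x T 0 - x T 1| ≤ max c |x 0 0 - x 0 1| := by
  by_cases hfar : |x 0 1 - x 0 0| < c
  · rcases hval with h | h | h
    · -- repulsive edge
      have h10 : A 1 0 = -1 := hsym ▸ h
      have hrep : |upd A c (x 0) 1 - upd A c (x 0) 0| = c :=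
        upd_repulse hc A hdiag h h10 (x 0) hfar
      have e0 : x 1 0 = upd A c (x 0) 0 := hupd 0 0
      have e1 : x 1 1 = upd A c (x 0) 1 := hupd 0 1
      refine ⟨1, eventually_const A c x hupd 1 fun i => ?_, ?_⟩
      · apply upd_far hc A hdiag
        rw [e1, e0, hrep]
        exact lt_irrefl c
      · rw [abs_sub_comm, e1, e0, hrep]
        exact le_max_left _ _
    · -- no edge
      have h10 : A 1 0 = 0 := hsym ▸ h
      exact ⟨0, eventually_const A c x hupd 0 (upd_zero hc A hdiag h h10 (x 0)),
        le_max_right _ _⟩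
    · -- attractive edge
      have h10 : A 1 0 = 1 := hsym ▸ h
      have hcons : x 1 1 = x 1 0 := by
        rw [hupd 0 1, hupd 0 0]
        exact upd_attract hc A hdiag h h10 (x 0) hfar
      refine ⟨1, eventually_const A c x hupd 1
        (upd_consensus hc A hdiag (by rw [h]; norm_num) (by rw [h10]; norm_num)
          (x 1) hcons), ?_⟩
      rw [← hcons, sub_self, abs_zero]
      exact le_trans hc.le (le_max_left _ _)
  · exact ⟨0, eventually_const A c x hupd 0 (upd_far hc A hdiag (x 0) hfar),
      le_max_right _ _⟩
end

section
/- Tie-breaking for the maximum (Corollary 4.5): in an all-repulsive network, if M = {i : x_i(t) ≥ x_j(t) for all j} is the set of nodes tied for the maximum opinion at time t, then at time t+1 the node with the highest index in M has the strictly highest opinion among all nodes. -/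
open Finset
open scoped Classical

section Aux

variable {n : ℕ} {A : Fin n → Fin n → ℤ} {c : ℝ} {y : Fin n → ℝ}

lemma term_self {k : Fin n} (hk : A k k = 1) : (A k k : ℝ) * M A c y k k = 0 := by
  simp [M, hk]

lemma term_tie {k l : Fin n} (hkl : A k l = -1) (h1 : y l = y k) :
    (A k l : ℝ) * M A c y k l = if (k : ℕ) < (l : ℕ) then -c else c := by
  rw [M, if_neg (by rw [hkl]; norm_num), if_pos h1, hkl]
  split <;> push_cast <;> ring

lemma term_lower {k l : Fin n} (hkl : A k l = -1) (h1 : y l < y k) (h2 : y k - y l < c) :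
    (A k l : ℝ) * M A c y k l = c - (y k - y l) := by
  rw [M, if_neg (by rw [hkl]; norm_num), if_neg (ne_of_lt h1),
    Real.sign_of_neg (by linarith : y l - y k < 0),
    abs_of_neg (by linarith : y l - y k < 0),
    abs_of_nonneg (by linarith : (0:ℝ) ≤ c - -(y l - y k)), hkl]
  push_cast; ring

lemma term_upper {k l : Fin n} (hkl : A k l = -1) (h1 : y k < y l) (h2 : y l - y k < c) :
    (A k l : ℝ) * M A c y k l = (y l - y k) - c := by
  rw [M, if_neg (by rw [hkl]; norm_num), if_neg (ne_of_gt h1),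
    Real.sign_of_pos (by linarith : 0 < y l - y k),
    abs_of_pos (by linarith : 0 < y l - y k),
    abs_of_nonneg (by linarith : (0:ℝ) ≤ c - (y l - y k)), hkl]
  push_cast; ring

lemma sum_ite_const (P : Fin n → Prop) [DecidablePred P] (a : ℝ) :
    (∑ l, if P l then a else 0) = ((univ.filter P).card : ℝ) * a := by
  rw [← Finset.sum_filter, Finset.sum_const, nsmul_eq_mul]

end Aux

/-- Tie-breaking for the maximum (Corollary 4.5): in the complete all-repulsive
network, the largest-index node among those tied for the maximum opinion has the
strictly highest opinion at the next step. -/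
theorem max_index_tie_breaking {n : ℕ} (A : Fin n → Fin n → ℤ) (c : ℝ) (hc : 0 < c)
    (hdiag : ∀ i, A i i = 1) (hA : ∀ i j, i ≠ j → A i j = -1)
    (x : ℕ → Fin n → ℝ) (hupd : ∀ t i, x (t + 1) i = upd A c (x t) i)
    (t : ℕ) (i : Fin n) (hmax : ∀ j, x t j ≤ x t i)
    (hidx : ∀ j, x t j = x t i → j ≤ i) :
    ∀ j, j ≠ i → x (t + 1) j < x (t + 1) i := by
  intro j hj
  rw [hupd t j, hupd t i]
  set y := x t with hy
  simp only [upd]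
  have hAji : A j i = -1 := hA j i hj
  have hAij : A i j = -1 := hA i j (Ne.symm hj)
  -- windows
  set Wi := univ.filter (fun l => |y l - y i| < c) with hWi
  set Wj := univ.filter (fun l => |y l - y j| < c) with hWj
  have memWi : ∀ l, l ∈ Wi ↔ |y l - y i| < c := by
    intro l; simp [hWi]
  have memWj : ∀ l, l ∈ Wj ↔ |y l - y j| < c := by
    intro l; simp [hWj]
  -- denominators equal cardinalities
  have habs1 : ∀ k l : Fin n, (|A k l| : ℝ) = 1 := by
    intro k l
    rcases eq_or_ne k l with rfl | h
    · simp [hdiag k]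
    · simp [hA k l h]
  have hden : ∀ k : Fin n,
      (∑ l, if |y l - y k| < c then (|A k l| : ℝ) else 0)
        = ((univ.filter (fun l => |y l - y k| < c)).card : ℝ) := by
    intro k
    calc (∑ l, if |y l - y k| < c then (|A k l| : ℝ) else 0)
        = ∑ l, if |y l - y k| < c then (1:ℝ) else 0 := by
          refine Finset.sum_congr rfl fun l _ => ?_
          rw [habs1]
      _ = _ := by rw [Finset.sum_boole]
  rw [hden i, hden j]
  have hii : i ∈ Wi := by rw [memWi]; simpa using hc
  have hjj : j ∈ Wj := by rw [memWj]; simpa using hc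
  have hNi : (0:ℝ) < (Wi.card : ℝ) := by
    exact_mod_cast Finset.card_pos.mpr ⟨i, hii⟩
  have hNj : (0:ℝ) < (Wj.card : ℝ) := by
    exact_mod_cast Finset.card_pos.mpr ⟨j, hjj⟩
  have hd0 : 0 ≤ y i - y j := by linarith [hmax j]
  -- the numerator for i is nonnegative; also record values of i's terms
  have hIval : ∀ l, l ≠ i → |y l - y i| < c →
      (A i l : ℝ) * M A c y i l = c - (y i - y l) := by
    intro l hli hw
    have hl : y l ≤ y i := hmax l
    rcases eq_or_lt_of_le hl with heq | hlt
    · have hle : l ≤ i := hidx l heq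
      have : ¬ ((i : ℕ) < (l : ℕ)) := by
        have := Fin.le_iff_val_le_val.mp hle; omega
      rw [term_tie (hA i l (Ne.symm hli)) heq, if_neg this, heq]
      ring_nf
    · have h2 : y i - y l < c := by
        have := abs_lt.mp hw; linarith
      exact term_lower (hA i l (Ne.symm hli)) hlt h2
  have hIpos : ∀ l, 0 ≤ (if |y l - y i| < c then (A i l : ℝ) * M A c y i l else 0) := by
    intro l
    by_cases hw : |y l - y i| < c
    · rw [if_pos hw]
      rcases eq_or_ne l i with rfl | hli
      · rw [term_self (hdiag l)]
      · rw [hIval l hli hw]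
        have := abs_lt.mp hw
        have hl : y l ≤ y i := hmax l
        rw [abs_of_nonpos (by linarith : y l - y i ≤ 0)] at hw
        linarith
    · rw [if_neg hw]
  have hNumI : 0 ≤ ∑ l, if |y l - y i| < c then (A i l : ℝ) * M A c y i l else 0 :=
    Finset.sum_nonneg fun l _ => hIpos l
  by_cases hd : y i - y j < c
  · -- near case: i and j see each other
    have hiWj : |y i - y j| < c := by rwa [abs_of_nonneg hd0]
    have hjWi : |y j - y i| < c := by rwa [abs_sub_comm]
    have hsub : Wi ⊆ Wj := by
      intro l hl
      rw [memWi] at hl; rw [memWj]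
      have h1 := abs_lt.mp hl
      have hl2 : y l ≤ y i := hmax l
      rw [abs_lt]; constructor <;> linarith
    have hNiNj : (Wi.card : ℝ) ≤ (Wj.card : ℝ) := by
      exact_mod_cast Finset.card_le_card hsub
    -- pointwise bound on j's terms
    have key : ∀ l ∈ (univ : Finset (Fin n)),
        (if |y l - y j| < c then (A j l : ℝ) * M A c y j l else 0) ≤
          (if |y l - y i| < c then (A i l : ℝ) * M A c y i l else 0)
          + (if |y l - y j| < c then (y i - y j) else 0)
          - (if l = i then c else 0) - (if l = j then c else 0) := by
      intro l _
      rcases eq_or_ne l i with rfl | hli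
      · -- l = i (the variable i has been substituted by l)
        rw [if_pos hiWj, if_pos hiWj, if_pos (show |y l - y l| < c by simpa using hc),
          term_self (hdiag l), if_pos rfl, if_neg (fun h => hj h.symm)]
        rcases eq_or_lt_of_le (hmax j) with heq | hlt
        · have hle : j ≤ l := hidx j heq
          have hlt' : (j : ℕ) < (l : ℕ) := by
            have h1 := Fin.le_iff_val_le_val.mp hle
            have h2 : (j : ℕ) ≠ (l : ℕ) := fun h => hj (Fin.ext h)
            omega
          rw [term_tie hAji (heq.symm), if_pos hlt']
          linarith
        · rw [term_upper hAji hlt hd]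
          linarith
      rcases eq_or_ne l j with rfl | hlj
      · -- l = j (the variable j has been substituted by l)
        rw [if_pos (show |y l - y l| < c by simpa using hc), term_self (hdiag l),
          if_pos hjWi, hIval l hli hjWi,
          if_pos (show |y l - y l| < c by simpa using hc), if_neg hli, if_pos rfl]
        linarith
      · -- l ∉ {i, j}
        rw [if_neg hli, if_neg hlj]
        by_cases hlWj : |y l - y j| < c
        · rw [if_pos hlWj, if_pos hlWj]
          by_cases hlWi : |y l - y i| < c
          · rw [if_pos hlWi, hIval l hli hlWi]
            have habj := abs_lt.mp hlWj
            have habi := abs_lt.mp hlWi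
            rcases lt_trichotomy (y l) (y j) with hlt | heq | hgt
            · rw [term_lower (hA j l (Ne.symm hlj)) hlt (by linarith)]
              linarith
            · rw [term_tie (hA j l (Ne.symm hlj)) heq]
              split <;> linarith
            · rw [term_upper (hA j l (Ne.symm hlj)) hgt (by linarith)]
              have : y l ≤ y i := hmax l
              linarith
          · rw [if_neg hlWi]
            have habj := abs_lt.mp hlWj
            have hl2 : y l ≤ y i := hmax l
            have hfar : c ≤ y i - y l := by
              by_contra hcon
              exact hlWi (abs_lt.mpr ⟨by linarith, by linarith⟩)
            have hlt : y l < y j := by linarith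
            rw [term_lower (hA j l (Ne.symm hlj)) hlt (by linarith)]
            linarith
        · rw [if_neg hlWj, if_neg hlWj]
          have := hIpos l
          linarith
    have hNumJ : (∑ l, if |y l - y j| < c then (A j l : ℝ) * M A c y j l else 0)
        ≤ (∑ l, if |y l - y i| < c then (A i l : ℝ) * M A c y i l else 0)
          + (Wj.card : ℝ) * (y i - y j) - c - c := by
      calc (∑ l, if |y l - y j| < c then (A j l : ℝ) * M A c y j l else 0)
          ≤ ∑ l, ((if |y l - y i| < c then (A i l : ℝ) * M A c y i l else 0)
            + (if |y l - y j| < c then (y i - y j) else 0)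
            - (if l = i then c else 0) - (if l = j then c else 0)) :=
            Finset.sum_le_sum key
        _ = _ := by
            rw [Finset.sum_sub_distrib, Finset.sum_sub_distrib, Finset.sum_add_distrib,
              sum_ite_const (fun l => |y l - y j| < c) (y i - y j)]
            simp [Finset.sum_ite_eq', ← hWj]
    set NumI := ∑ l, if |y l - y i| < c then (A i l : ℝ) * M A c y i l else 0 with hNI
    set NumJ := ∑ l, if |y l - y j| < c then (A j l : ℝ) * M A c y j l else 0 with hNJ
    have e1 : NumJ / (Wj.card : ℝ) ≤ (NumI + (Wj.card : ℝ) * (y i - y j) - c - c) / (Wj.card : ℝ) := by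
      gcongr
    have e2 : (NumI + (Wj.card : ℝ) * (y i - y j) - c - c) / (Wj.card : ℝ)
        = NumI / (Wj.card : ℝ) + (y i - y j) - 2 * c / (Wj.card : ℝ) := by
      field_simp; ring
    have e3 : NumI / (Wj.card : ℝ) ≤ NumI / (Wi.card : ℝ) := by
      gcongr
    have e4 : 0 < 2 * c / (Wj.card : ℝ) := div_pos (by linarith) hNj
    calc y j + NumJ / (Wj.card : ℝ)
        ≤ y j + (NumI / (Wj.card : ℝ) + (y i - y j) - 2 * c / (Wj.card : ℝ)) := by
          rw [← e2]; linarith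
      _ < y i + NumI / (Wi.card : ℝ) := by linarith
  · -- far case: y i - y j ≥ c
    push_neg at hd
    have key : ∀ l ∈ (univ : Finset (Fin n)),
        (if |y l - y j| < c then (A j l : ℝ) * M A c y j l else 0) ≤
          (if |y l - y j| < c then c else 0) - (if l = j then c else 0) := by
      intro l _
      rcases eq_or_ne l j with rfl | hlj
      · rw [if_pos (by simpa using hc), if_pos (by simpa using hc), if_pos rfl,
          term_self (hdiag l)]
        linarith
      · rw [if_neg hlj]
        by_cases hw : |y l - y j| < c
        · rw [if_pos hw, if_pos hw]
          have hab := abs_lt.mp hw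
          rcases lt_trichotomy (y l) (y j) with hlt | heq | hgt
          · rw [term_lower (hA j l (Ne.symm hlj)) hlt (by linarith)]
            linarith
          · rw [term_tie (hA j l (Ne.symm hlj)) heq]
            split <;> linarith
          · rw [term_upper (hA j l (Ne.symm hlj)) hgt (by linarith)]
            linarith
        · rw [if_neg hw, if_neg hw]
          linarith
    have hNumJ : (∑ l, if |y l - y j| < c then (A j l : ℝ) * M A c y j l else 0)
        ≤ (Wj.card : ℝ) * c - c := by
      calc (∑ l, if |y l - y j| < c then (A j l : ℝ) * M A c y j l else 0)
          ≤ ∑ l, ((if |y l - y j| < c then c else 0) - (if l = j then c else 0)) :=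
            Finset.sum_le_sum key
        _ = _ := by
            rw [Finset.sum_sub_distrib, sum_ite_const (fun l => |y l - y j| < c) c]
            simp [Finset.sum_ite_eq', ← hWj]
    set NumI := ∑ l, if |y l - y i| < c then (A i l : ℝ) * M A c y i l else 0 with hNI
    set NumJ := ∑ l, if |y l - y j| < c then (A j l : ℝ) * M A c y j l else 0 with hNJ
    have e1 : NumJ / (Wj.card : ℝ) ≤ ((Wj.card : ℝ) * c - c) / (Wj.card : ℝ) := by
      gcongr
    have e2 : ((Wj.card : ℝ) * c - c) / (Wj.card : ℝ) = c - c / (Wj.card : ℝ) := by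
      field_simp
    have e4 : 0 < c / (Wj.card : ℝ) := div_pos hc hNj
    have e5 : 0 ≤ NumI / (Wi.card : ℝ) := div_nonneg hNumI (le_of_lt hNi)
    calc y j + NumJ / (Wj.card : ℝ)
        ≤ y j + (c - c / (Wj.card : ℝ)) := by rw [← e2]; linarith
      _ < y j + c := by linarith
      _ ≤ y i := by linarith
      _ ≤ y i + NumI / (Wi.card : ℝ) := by linarith
end

section
/- Consecutive gap bound (Lemma 4.9): in the complete all-repulsive network, if nodes i and j satisfy x_j(t) < x_i(t) < x_j(t) + c and no node k has x_j(t) < x_k(t) < x_i(t), then |x_i(t+1) - x_j(t+1)| ≤ c. -/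
open Finset
open scoped Classical

lemma upd_eq_aux {n : ℕ} (A : Fin n → Fin n → ℤ) (c : ℝ) (x : Fin n → ℝ)
    (hdiag : ∀ i, A i i = 1) (hA : ∀ i j, i ≠ j → A i j = -1)
    (hinj : Function.Injective x) (i : Fin n) :
    upd A c x i = x i +
      (∑ k ∈ univ.filter (fun k => |x k - x i| < c),
        (x k - x i - c * Real.sign (x k - x i))) /
      ((univ.filter (fun k => |x k - x i| < c)).card : ℝ) := by
  unfold upd
  have hden : (∑ k, if |x k - x i| < c then (|A i k| : ℝ) else 0)
      = ((univ.filter (fun k => |x k - x i| < c)).card : ℝ) := by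
    rw [← Finset.sum_boole]
    refine Finset.sum_congr rfl fun k _ => ?_
    by_cases hk : k = i
    · subst hk; simp [hdiag]
    · have h : A i k = -1 := hA i k (Ne.symm hk)
      simp [h]
  have hnum : (∑ k, if |x k - x i| < c then (A i k : ℝ) * M A c x i k else 0)
      = ∑ k ∈ univ.filter (fun k => |x k - x i| < c),
          (x k - x i - c * Real.sign (x k - x i)) := by
    rw [Finset.sum_filter]
    refine Finset.sum_congr rfl fun k _ => ?_
    by_cases hP : |x k - x i| < c
    · rw [if_pos hP, if_pos hP]
      by_cases hk : k = i
      · subst hk; simp [M, hdiag k, Real.sign_zero]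
      · have hAk : A i k = -1 := hA i k (Ne.symm hk)
        have hxk : x k ≠ x i := fun h => hk (hinj h)
        have habs : abs (c - |x k - x i|) = c - |x k - x i| :=
          abs_of_nonneg (by linarith [abs_nonneg (x k - x i)])
        have hM : M A c x i k = Real.sign (x k - x i) * (c - |x k - x i|) := by
          unfold M
          rw [if_neg (by rw [hAk]; decide), if_neg hxk, habs]
        rcases (sub_ne_zero.mpr hxk).lt_or_gt with hd | hd
        · rw [hM, hAk, Real.sign_of_neg hd, abs_of_neg hd]; push_cast; ring
        · rw [hM, hAk, Real.sign_of_pos hd, abs_of_pos hd]; push_cast; ring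
    · simp [hP]
  rw [hden, hnum]

set_option maxHeartbeats 1600000 in
/-- Consecutive gap bound (Lemma 4.9): in the complete all-repulsive network, two
nodes within confidence of each other with no node strictly between them remain at
distance at most `c` after one update. -/
theorem consecutive_gap_le {n : ℕ} (A : Fin n → Fin n → ℤ) (c : ℝ) (hc : 0 < c)
    (hdiag : ∀ i, A i i = 1) (hA : ∀ i j, i ≠ j → A i j = -1)
    (x : Fin n → ℝ) (hinj : Function.Injective x) (i j : Fin n)
    (hlt : x j < x i) (hconf : x i < x j + c)
    (hbetween : ∀ k, ¬(x j < x k ∧ x k < x i)) :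
    |upd A c x i - upd A c x j| ≤ c := by
  classical
  have hij : i ≠ j := by rintro rfl; exact lt_irrefl _ hlt
  set U1 : Finset (Fin n) := univ.filter (fun k => x i < x k ∧ x k < x j + c) with hU1
  set U2 : Finset (Fin n) := univ.filter (fun k => x j + c ≤ x k ∧ x k < x i + c) with hU2
  set L1 : Finset (Fin n) := univ.filter (fun k => x i - c < x k ∧ x k < x j) with hL1
  set L2 : Finset (Fin n) := univ.filter (fun k => x j - c < x k ∧ x k ≤ x i - c) with hL2
  have hmU1 : ∀ k, k ∈ U1 ↔ (x i < x k ∧ x k < x j + c) := fun k => by simp [hU1]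
  have hmU2 : ∀ k, k ∈ U2 ↔ (x j + c ≤ x k ∧ x k < x i + c) := fun k => by simp [hU2]
  have hmL1 : ∀ k, k ∈ L1 ↔ (x i - c < x k ∧ x k < x j) := fun k => by simp [hL1]
  have hmL2 : ∀ k, k ∈ L2 ↔ (x j - c < x k ∧ x k ≤ x i - c) := fun k => by simp [hL2]
  have key : ∀ k, k ≠ i → k ≠ j → (x k < x j ∨ x i < x k) := by
    intro k hki hkj
    rcases lt_trichotomy (x k) (x j) with h | h | h
    · exact Or.inl h
    · exact absurd (hinj h) hkj
    rcases lt_trichotomy (x k) (x i) with h' | h' | h'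
    · exact absurd ⟨h, h'⟩ (hbetween k)
    · exact absurd (hinj h') hki
    · exact Or.inr h'
  have hVi : univ.filter (fun k => |x k - x i| < c)
      = insert i (insert j (U1 ∪ (U2 ∪ L1))) := by
    ext k
    simp only [mem_filter, mem_univ, true_and, mem_insert, mem_union,
      hmU1 k, hmU2 k, hmL1 k, abs_lt]
    constructor
    · rintro ⟨h1, h2⟩
      by_cases hki : k = i
      · exact Or.inl hki
      by_cases hkj : k = j
      · exact Or.inr (Or.inl hkj)
      rcases key k hki hkj with h | h
      · exact Or.inr (Or.inr (Or.inr (Or.inr ⟨by linarith, h⟩)))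
      · rcases le_or_gt (x j + c) (x k) with h' | h'
        · exact Or.inr (Or.inr (Or.inr (Or.inl ⟨h', by linarith⟩)))
        · exact Or.inr (Or.inr (Or.inl ⟨h, h'⟩))
    · rintro (rfl | rfl | ⟨h1, h2⟩ | ⟨h1, h2⟩ | ⟨h1, h2⟩) <;> constructor <;> linarith
  have hVj : univ.filter (fun k => |x k - x j| < c)
      = insert i (insert j (U1 ∪ (L1 ∪ L2))) := by
    ext k
    simp only [mem_filter, mem_univ, true_and, mem_insert, mem_union,
      hmU1 k, hmL1 k, hmL2 k, abs_lt]
    constructor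
    · rintro ⟨h1, h2⟩
      by_cases hki : k = i
      · exact Or.inl hki
      by_cases hkj : k = j
      · exact Or.inr (Or.inl hkj)
      rcases key k hki hkj with h | h
      · rcases le_or_gt (x k) (x i - c) with h' | h'
        · exact Or.inr (Or.inr (Or.inr (Or.inr ⟨by linarith, h'⟩)))
        · exact Or.inr (Or.inr (Or.inr (Or.inl ⟨h', h⟩)))
      · exact Or.inr (Or.inr (Or.inl ⟨h, by linarith⟩))
    · rintro (rfl | rfl | ⟨h1, h2⟩ | ⟨h1, h2⟩ | ⟨h1, h2⟩) <;> constructor <;> linarith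
  -- non-membership
  have hjVi : j ∉ U1 ∪ (U2 ∪ L1) := by
    simp only [mem_union, hmU1 j, hmU2 j, hmL1 j]
    rintro (⟨h1, h2⟩ | ⟨h1, h2⟩ | ⟨h1, h2⟩) <;> linarith
  have hiVi : i ∉ insert j (U1 ∪ (U2 ∪ L1)) := by
    simp only [mem_insert, mem_union, hmU1 i, hmU2 i, hmL1 i]
    rintro (h | ⟨h1, h2⟩ | ⟨h1, h2⟩ | ⟨h1, h2⟩)
    · exact hij h
    all_goals linarith
  have hjVj : j ∉ U1 ∪ (L1 ∪ L2) := by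
    simp only [mem_union, hmU1 j, hmL1 j, hmL2 j]
    rintro (⟨h1, h2⟩ | ⟨h1, h2⟩ | ⟨h1, h2⟩) <;> linarith
  have hiVj : i ∉ insert j (U1 ∪ (L1 ∪ L2)) := by
    simp only [mem_insert, mem_union, hmU1 i, hmL1 i, hmL2 i]
    rintro (h | ⟨h1, h2⟩ | ⟨h1, h2⟩ | ⟨h1, h2⟩)
    · exact hij h
    all_goals linarith
  -- disjointness
  have hd1 : Disjoint U1 (U2 ∪ L1) := by
    rw [Finset.disjoint_left]
    intro k hk hk'
    rw [hmU1 k] at hk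
    rw [mem_union, hmU2 k, hmL1 k] at hk'
    rcases hk' with ⟨h1, h2⟩ | ⟨h1, h2⟩ <;> linarith [hk.1, hk.2]
  have hd2 : Disjoint U2 L1 := by
    rw [Finset.disjoint_left]
    intro k hk hk'
    rw [hmU2 k] at hk; rw [hmL1 k] at hk'
    linarith [hk.1, hk'.2]
  have hd3 : Disjoint U1 (L1 ∪ L2) := by
    rw [Finset.disjoint_left]
    intro k hk hk'
    rw [hmU1 k] at hk
    rw [mem_union, hmL1 k, hmL2 k] at hk'
    rcases hk' with ⟨h1, h2⟩ | ⟨h1, h2⟩ <;> linarith [hk.1, hk.2]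
  have hd4 : Disjoint L1 L2 := by
    rw [Finset.disjoint_left]
    intro k hk hk'
    rw [hmL1 k] at hk; rw [hmL2 k] at hk'
    linarith [hk.1, hk'.2]
  -- scalars
  set g : ℝ := x i - x j with hgdef
  have hg0 : 0 < g := sub_pos.mpr hlt
  have hgc : g < c := by rw [hgdef]; linarith
  set a : ℝ := (U1.card : ℝ) with hadef
  set b : ℝ := (U2.card : ℝ) with hbdef
  set p : ℝ := (L1.card : ℝ) with hpdef
  set q : ℝ := (L2.card : ℝ) with hqdef
  have ha : 0 ≤ a := Nat.cast_nonneg _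
  have hb : 0 ≤ b := Nat.cast_nonneg _
  have hp : 0 ≤ p := Nat.cast_nonneg _
  have hq : 0 ≤ q := Nat.cast_nonneg _
  set S1 : ℝ := ∑ k ∈ U1, (x k - x j - c) with hS1def
  set S2 : ℝ := ∑ k ∈ L1, (x k - x j + c) with hS2def
  set SB : ℝ := ∑ k ∈ U2, (x k - x j - c) with hSBdef
  set SZ : ℝ := ∑ k ∈ L2, (x k - x j + c) with hSZdef
  -- bounds
  have hS1u : S1 ≤ 0 := by
    rw [hS1def]
    refine Finset.sum_nonpos fun k hk => ?_
    rw [hmU1 k] at hk; linarith [hk.2]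
  have hS1l : a * (g - c) ≤ S1 := by
    have h := Finset.card_nsmul_le_sum U1 (fun k => x k - x j - c) (g - c)
      (fun k hk => by rw [hmU1 k] at hk; show g - c ≤ x k - x j - c; rw [hgdef]; linarith [hk.1])
    rw [nsmul_eq_mul] at h
    exact h
  have hS2u : S2 ≤ p * c := by
    have h := Finset.sum_le_card_nsmul L1 (fun k => x k - x j + c) c
      (fun k hk => by rw [hmL1 k] at hk; show x k - x j + c ≤ c; linarith [hk.2])
    rw [nsmul_eq_mul] at h
    exact h
  have hS2l : p * g ≤ S2 := by
    have h := Finset.card_nsmul_le_sum L1 (fun k => x k - x j + c) g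
      (fun k hk => by rw [hmL1 k] at hk; show g ≤ x k - x j + c; rw [hgdef]; linarith [hk.1])
    rw [nsmul_eq_mul] at h
    exact h
  have hB0 : 0 ≤ SB := by
    rw [hSBdef]
    refine Finset.sum_nonneg fun k hk => ?_
    rw [hmU2 k] at hk; linarith [hk.1]
  have hBu : SB ≤ b * g := by
    have h := Finset.sum_le_card_nsmul U2 (fun k => x k - x j - c) g
      (fun k hk => by rw [hmU2 k] at hk; show x k - x j - c ≤ g; rw [hgdef]; linarith [hk.2])
    rw [nsmul_eq_mul] at h
    exact h
  have hZ0 : 0 ≤ SZ := by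
    rw [hSZdef]
    refine Finset.sum_nonneg fun k hk => ?_
    rw [hmL2 k] at hk; linarith [hk.1]
  have hZu : SZ ≤ q * g := by
    have h := Finset.sum_le_card_nsmul L2 (fun k => x k - x j + c) g
      (fun k hk => by rw [hmL2 k] at hk; show x k - x j + c ≤ g; rw [hgdef]; linarith [hk.2])
    rw [nsmul_eq_mul] at h
    exact h
  -- cards
  have hcardVi : ((univ.filter (fun k => |x k - x i| < c)).card : ℝ) = a + b + p + 2 := by
    rw [hVi, card_insert_of_notMem hiVi, card_insert_of_notMem hjVi,
      card_union_of_disjoint hd1, card_union_of_disjoint hd2]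
    rw [hadef, hbdef, hpdef]; push_cast; ring
  have hcardVj : ((univ.filter (fun k => |x k - x j| < c)).card : ℝ) = a + p + q + 2 := by
    rw [hVj, card_insert_of_notMem hiVj, card_insert_of_notMem hjVj,
      card_union_of_disjoint hd3, card_union_of_disjoint hd4]
    rw [hadef, hpdef, hqdef]; push_cast; ring
  -- sums
  have hsumVi : (∑ k ∈ univ.filter (fun k => |x k - x i| < c),
      (x k - x i - c * Real.sign (x k - x i)))
      = (c - g) + (S1 - a * g) + (SB - b * g) + (S2 - p * g) := by
    rw [hVi, sum_insert hiVi, sum_insert hjVi, sum_union hd1, sum_union hd2]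
    have e0 : x i - x i - c * Real.sign (x i - x i) = 0 := by simp
    have e1 : x j - x i - c * Real.sign (x j - x i) = c - g := by
      rw [Real.sign_of_neg (by linarith), hgdef]; ring
    have e2 : ∑ k ∈ U1, (x k - x i - c * Real.sign (x k - x i))
        = S1 - a * g := by
      rw [show ∑ k ∈ U1, (x k - x i - c * Real.sign (x k - x i))
          = ∑ k ∈ U1, ((x k - x j - c) - g) from
        Finset.sum_congr rfl fun k hk => by
          rw [hmU1 k] at hk
          rw [Real.sign_of_pos (by linarith [hk.1] : (0:ℝ) < x k - x i), hgdef]; ring]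
      rw [Finset.sum_sub_distrib, Finset.sum_const, nsmul_eq_mul, hS1def, hadef]
    have e3 : ∑ k ∈ U2, (x k - x i - c * Real.sign (x k - x i))
        = SB - b * g := by
      rw [show ∑ k ∈ U2, (x k - x i - c * Real.sign (x k - x i))
          = ∑ k ∈ U2, ((x k - x j - c) - g) from
        Finset.sum_congr rfl fun k hk => by
          rw [hmU2 k] at hk
          rw [Real.sign_of_pos (by linarith [hk.1] : (0:ℝ) < x k - x i), hgdef]; ring]
      rw [Finset.sum_sub_distrib, Finset.sum_const, nsmul_eq_mul, hSBdef, hbdef]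
    have e4 : ∑ k ∈ L1, (x k - x i - c * Real.sign (x k - x i))
        = S2 - p * g := by
      rw [show ∑ k ∈ L1, (x k - x i - c * Real.sign (x k - x i))
          = ∑ k ∈ L1, ((x k - x j + c) - g) from
        Finset.sum_congr rfl fun k hk => by
          rw [hmL1 k] at hk
          rw [Real.sign_of_neg (by linarith [hk.2] : x k - x i < 0), hgdef]; ring]
      rw [Finset.sum_sub_distrib, Finset.sum_const, nsmul_eq_mul, hS2def, hpdef]
    rw [e0, e1, e2, e3, e4]; ring
  have hsumVj : (∑ k ∈ univ.filter (fun k => |x k - x j| < c),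
      (x k - x j - c * Real.sign (x k - x j)))
      = (g - c) + S1 + S2 + SZ := by
    rw [hVj, sum_insert hiVj, sum_insert hjVj, sum_union hd3, sum_union hd4]
    have e0 : x j - x j - c * Real.sign (x j - x j) = 0 := by simp
    have e1 : x i - x j - c * Real.sign (x i - x j) = g - c := by
      rw [Real.sign_of_pos (by linarith), hgdef]; ring
    have e2 : ∑ k ∈ U1, (x k - x j - c * Real.sign (x k - x j)) = S1 := by
      rw [hS1def]
      refine Finset.sum_congr rfl fun k hk => ?_
      rw [hmU1 k] at hk
      rw [Real.sign_of_pos (by linarith [hk.1] : (0:ℝ) < x k - x j)]; ring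
    have e3 : ∑ k ∈ L1, (x k - x j - c * Real.sign (x k - x j)) = S2 := by
      rw [hS2def]
      refine Finset.sum_congr rfl fun k hk => ?_
      rw [hmL1 k] at hk
      rw [Real.sign_of_neg (by linarith [hk.2] : x k - x j < 0)]; ring
    have e4 : ∑ k ∈ L2, (x k - x j - c * Real.sign (x k - x j)) = SZ := by
      rw [hSZdef]
      refine Finset.sum_congr rfl fun k hk => ?_
      rw [hmL2 k] at hk
      rw [Real.sign_of_neg (by linarith [hk.2] : x k - x j < 0)]; ring
    rw [e0, e1, e2, e3, e4]; ring
  -- put it together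
  rw [upd_eq_aux A c x hdiag hA hinj i, upd_eq_aux A c x hdiag hA hinj j,
    hsumVi, hsumVj, hcardVi, hcardVj]
  have hD1 : (0:ℝ) < a + b + p + 2 := by linarith
  have hD2 : (0:ℝ) < a + p + q + 2 := by linarith
  clear_value a b p q S1 S2 SB SZ
  clear hadef hbdef hpdef hqdef hS1def hS2def hSBdef hSZdef hcardVi hcardVj hsumVi hsumVj
  clear hVi hVj hjVi hiVi hjVj hiVj hd1 hd2 hd3 hd4 hmU1 hmU2 hmL1 hmL2 key
  clear hU1 hU2 hL1 hL2 U1 U2 L1 L2 hbetween hinj hA hdiag A hij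
  have hEq : x i + ((c - g) + (S1 - a * g) + (SB - b * g) + (S2 - p * g)) / (a + b + p + 2)
      - (x j + ((g - c) + S1 + S2 + SZ) / (a + p + q + 2))
      = ((g + c + S1 + S2 + SB) * (a + p + q + 2)
          - (g - c + S1 + S2 + SZ) * (a + b + p + 2))
        / ((a + b + p + 2) * (a + p + q + 2)) := by
    rw [hgdef]
    field_simp
    ring
  rw [hEq, abs_div, abs_of_pos (mul_pos hD1 hD2), div_le_iff₀ (mul_pos hD1 hD2)]
  rw [abs_le]
  constructor
  · -- lower bound
    have K1 : 0 ≤ b * ((p+1)*c - (g + (S1 + S2))) :=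
      mul_nonneg hb (by linarith)
    have K2 : 0 ≤ q * (c + a*c - ((a+p+1)*g - (S1 + S2))) :=
      mul_nonneg hq (by linarith)
    have K3 : 0 ≤ q * b * (c - g) := mul_nonneg (mul_nonneg hq hb) (by linarith)
    have K4 : 0 ≤ SB * (a + p + q + 2) := mul_nonneg hB0 (by linarith)
    have K5 : 0 ≤ (q * g - SZ) * (a + b + p + 2) :=
      mul_nonneg (by linarith) (by linarith)
    have KL : 0 ≤ c * ((a+p+2)*(a+p+2) + 2*(a+p+2) + b*(a+2) + q*(p+2)) := mul_nonneg hc.le (by nlinarith [mul_nonneg ha hp, mul_nonneg ha hq, mul_nonneg hb hp, mul_nonneg hq hp, mul_nonneg ha ha, mul_nonneg hp hp, mul_nonneg ha hb])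
    linarith [K1, K2, K3, K4, K5, KL]
  · -- upper bound
    have H1 : 0 ≤ q * ((p+1)*c - (g + (S1 + S2))) :=
      mul_nonneg hq (by linarith)
    have H2 : 0 ≤ b * (c + a*c - ((a+p+1)*g - (S1 + S2))) :=
      mul_nonneg hb (by linarith)
    have H3 : 0 ≤ b * q * (c - g) := mul_nonneg (mul_nonneg hb hq) (by linarith)
    have H4 : 0 ≤ SZ * (a + b + p + 2) := mul_nonneg hZ0 (by linarith)
    have H5 : 0 ≤ (b * g - SB) * (a + p + q + 2) :=
      mul_nonneg (by linarith) (by linarith)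
    have HL : 0 ≤ c * ((a+p+2)*(a+p) + a*q + b*p) := mul_nonneg hc.le (by nlinarith [mul_nonneg ha hp, mul_nonneg ha hq, mul_nonneg hb hp, mul_nonneg hq hp, mul_nonneg ha ha, mul_nonneg hp hp, mul_nonneg ha hb])
    linarith [H1, H2, H3, H4, H5, HL]
end

section
/- In an all-repulsive network at its converged (fixed-point) state, any two distinct nodes connected by an edge must have opinions at least c apart: if x(t+1) = x(t) and A_ij = -1, then |x_i(t) - x_j(t)| ≥ c. -/
open Finset
open scoped Classical

/-- At a converged (fixed-point) state of an all-repulsive network, any two distinct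
nodes joined by a repulsive edge have opinions at least `c` apart. -/
theorem fixed_point_separation {n : ℕ} (A : Fin n → Fin n → ℤ) (c : ℝ) (hc : 0 < c)
    (hdiag : ∀ i, A i i = 1) (hA : ∀ i j, i ≠ j → A i j = -1 ∨ A i j = 0)
    (hsym : ∀ i j, A i j = A j i)
    (x : Fin n → ℝ) (hfix : ∀ i, upd A c x i = x i) :
    ∀ i j, i ≠ j → A i j = -1 → c ≤ |x i - x j| := by
  by_contra hcon
  push_neg at hcon
  obtain ⟨i0, j0, hij0, hA0, hlt0⟩ := hcon
  classical
  set T : Finset (Fin n) :=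
    Finset.univ.filter (fun i => ∃ j, j ≠ i ∧ A i j = -1 ∧ |x j - x i| < c) with hT
  have hi0T : i0 ∈ T := by
    rw [hT, Finset.mem_filter]
    exact ⟨Finset.mem_univ _, j0, Ne.symm hij0, hA0, by rwa [abs_sub_comm]⟩
  obtain ⟨b, hbT, hbmax⟩ := T.exists_max_image x ⟨i0, hi0T⟩
  set T' : Finset (Fin n) := T.filter (fun i => x i = x b) with hT'
  have hbT' : b ∈ T' := by rw [hT', Finset.mem_filter]; exact ⟨hbT, rfl⟩
  set i : Fin n := T'.max' ⟨b, hbT'⟩ with hi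
  have hiT' : i ∈ T' := T'.max'_mem _
  have hiT : i ∈ T := (Finset.mem_filter.mp hiT').1
  have hixb : x i = x b := (Finset.mem_filter.mp hiT').2
  -- each node in T has opinion ≤ x i
  have hle : ∀ j ∈ T, x j ≤ x i := fun j hj => hixb ▸ hbmax j hj
  -- key positivity
  have key : ∀ j, j ≠ i → A i j = -1 → |x j - x i| < c →
      0 < (A i j : ℝ) * M A c x i j := by
    intro j hne hAij hd
    have hjT : j ∈ T := by
      rw [hT, Finset.mem_filter]
      refine ⟨Finset.mem_univ _, i, hne.symm, ?_, ?_⟩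
      · rw [hsym]; exact hAij
      · rwa [abs_sub_comm]
    have hxle : x j ≤ x i := hle j hjT
    have hnotle : ¬ (0 : ℤ) ≤ A i j := by rw [hAij]; decide
    rcases hxle.lt_or_eq with hlt | heq
    · have hne' : x j ≠ x i := ne_of_lt hlt
      rw [M, if_neg hnotle, if_neg hne', hAij]
      have hsgn : Real.sign (x j - x i) = -1 := Real.sign_of_neg (by linarith)
      have habs : abs (c - |x j - x i|) = c - |x j - x i| := abs_of_pos (by linarith)
      rw [hsgn, habs]
      push_cast
      have h0 : 0 ≤ |x j - x i| := abs_nonneg _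
      nlinarith
    · have hjT' : j ∈ T' := by
        rw [hT', Finset.mem_filter]
        exact ⟨hjT, heq.trans hixb⟩
      have hji : j < i := lt_of_le_of_ne (T'.le_max' j hjT') hne
      have hnotlt : ¬ ((i : ℕ) < (j : ℕ)) := by
        exact not_lt.mpr (le_of_lt hji)
      rw [M, if_neg hnotle, if_pos heq, if_neg hnotlt, hAij]
      push_cast
      linarith
  -- nonnegativity of all terms
  have hterm_nonneg : ∀ j : Fin n,
      0 ≤ (if |x j - x i| < c then (A i j : ℝ) * M A c x i j else 0) := by
    intro j
    split_ifs with hd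
    · by_cases hji : j = i
      · subst hji
        rw [M, if_pos (by rw [hdiag]; decide)]
        simp
      · rcases hA i j (fun h => hji h.symm) with h1 | h0
        · exact le_of_lt (key j hji h1 hd)
        · rw [h0]; push_cast; simp
    · exact le_rfl
  -- denominator positive
  have hDpos : 0 < ∑ j, if |x j - x i| < c then (|A i j| : ℝ) else 0 := by
    apply Finset.sum_pos'
    · intro j _
      split_ifs
      · positivity
      · exact le_rfl
    · refine ⟨i, Finset.mem_univ _, ?_⟩
      rw [if_pos (by simpa using hc), hdiag]
      norm_num
  -- numerator is zero
  have hfi := hfix i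
  rw [upd] at hfi
  have hdiv : (∑ j, if |x j - x i| < c then (A i j : ℝ) * M A c x i j else 0) /
      (∑ j, if |x j - x i| < c then (|A i j| : ℝ) else 0) = 0 := by linarith
  have hN : (∑ j, if |x j - x i| < c then (A i j : ℝ) * M A c x i j else 0) = 0 :=
    (div_eq_zero_iff.mp hdiv).resolve_right (ne_of_gt hDpos)
  -- but the sum is positive
  obtain ⟨jw, hjwne, hjwA, hjwd⟩ := (Finset.mem_filter.mp hiT).2
  have hpos : 0 < ∑ j, if |x j - x i| < c then (A i j : ℝ) * M A c x i j else 0 := by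
    apply Finset.sum_pos' (fun j _ => hterm_nonneg j)
    exact ⟨jw, Finset.mem_univ _, by rw [if_pos hjwd]; exact key jw hjwne hjwA hjwd⟩
  linarith
end
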